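/- In the alphabet-reduction construction, replacing each transition s →^{a_l} t (over alphabet Σ × {1,...,m}) in all automata by a chain s →^a (stl0) →^# (stl1) →^# ... →^# (stll) →^$ t with fresh intermediate states preserves simulation on old states: if ≼ is a simulation from B to the product A_1 ⊗ ... ⊗ A_n, then the extended relation ≼' (adding pairs of corresponding intermediate states as described) is a simulation from B' to A'_1 ⊗ ... ⊗ A'_n, and the largest simulation from B' to the primed product restricted to pairs of old states equals the largest simulation from B to the original product. -/

import Mathlib

def IsSimulation {QA QB A : Type*} (δA : QA → A → Set QA) (δB : QB → A → Set QB)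
    (R : QA → QB → Prop) : Prop :=
  ∀ p q, R p q → ∀ a, ∀ p' ∈ δA p a, ∃ q' ∈ δB q a, R p' q'

def Sim {QA QB A : Type*} (δA : QA → A → Set QA) (δB : QB → A → Set QB)
    (p : QA) (q : QB) : Prop :=
  ∃ R, IsSimulation δA δB R ∧ R p q

/-- The reduced alphabet `Σ ∪ {#, $}`. -/
inductive NewLetter (A : Type*) where
  | letter (a : A)
  | hash
  | dollar

/-- View of a partial deterministic transition function as a set-valued one. -/
def toSet {Q A : Type*} (δ : Q → A → Option Q) (q : Q) (a : A) : Set Q :=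
  {q' | δ q a = some q'}

/-- The primed automaton: every transition `s →^{(a,l)} t` is replaced by the
chain `s →^a (stl0) →^# (stl1) →^# ⋯ →^# (stll) →^$ t` through fresh
intermediate states `(s, t, l, k)` with `k ≤ l`. -/
def primeDelta {A Q : Type*} (m : ℕ) (δ : Q → A × Fin m → Option Q) :
    (Q ⊕ (Q × Q × Fin m × ℕ)) → NewLetter A → Set (Q ⊕ (Q × Q × Fin m × ℕ))
  | Sum.inl s, NewLetter.letter a =>
      {x | ∃ (t : Q) (l : Fin m), δ s (a, l) = some t ∧ x = Sum.inr (s, t, l, 0)}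
  | Sum.inr (s, t, l, k), NewLetter.hash =>
      {x | k < (l : ℕ) ∧ x = Sum.inr (s, t, l, k + 1)}
  | Sum.inr (s, t, l, k), NewLetter.dollar =>
      {x | k = (l : ℕ) ∧ x = Sum.inl t}
  | _, _ => ∅

/-- Asynchronous product of the original deterministic automata. -/
def pdeltaO {n m : ℕ} {A : Type*} {Q : Fin n → Type*}
    (δ : ∀ i, Q i → A × Fin m → Option (Q i)) (s : ∀ i, Q i) (al : A × Fin m) :
    Set (∀ i, Q i) :=
  {t | ∃ i, δ i (s i) al = some (t i) ∧ ∀ j, j ≠ i → t j = s j}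

/-- Asynchronous product of the primed automata. -/
def pdeltaP {n m : ℕ} {A : Type*} {Q : Fin n → Type*}
    (δ : ∀ i, Q i → A × Fin m → Option (Q i))
    (s : ∀ i, Q i ⊕ (Q i × Q i × Fin m × ℕ)) (a : NewLetter A) :
    Set (∀ i, Q i ⊕ (Q i × Q i × Fin m × ℕ)) :=
  {t | ∃ i, t i ∈ primeDelta m (δ i) (s i) a ∧ ∀ j, j ≠ i → t j = s j}

/-- The extension `≼'` of a relation `R` from `B` to the product: `R` itself on
(embedded) old states, together with all pairs `((stlk), u')` where
`s →^{(a,l)} t` in `B`, `v →^{(a,l)} w` in the product with the move in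
component `i`, `s R v`, `t R w`, `u'` agrees with `v` outside `i`, and
`u' i = (vᵢ wᵢ l k)` with `k ≤ l`. -/
def extRel {n m : ℕ} {A S : Type*} {Q : Fin n → Type*}
    (δB : S → A × Fin m → Option S)
    (δ : ∀ i, Q i → A × Fin m → Option (Q i))
    (R : S → (∀ i, Q i) → Prop) :
    (S ⊕ (S × S × Fin m × ℕ)) → (∀ i, Q i ⊕ (Q i × Q i × Fin m × ℕ)) → Prop :=
  fun x u' =>
    (∃ s u, x = Sum.inl s ∧ R s u ∧ ∀ i, u' i = Sum.inl (u i)) ∨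
    (∃ (s t : S) (l : Fin m) (k : ℕ) (a : A) (v w : ∀ i, Q i) (i : Fin n),
      x = Sum.inr (s, t, l, k) ∧ k ≤ (l : ℕ) ∧
      δB s (a, l) = some t ∧ R s v ∧ R t w ∧
      δ i (v i) (a, l) = some (w i) ∧ (∀ j, j ≠ i → w j = v j) ∧
      u' i = Sum.inr (v i, w i, l, k) ∧ ∀ j, j ≠ i → u' j = Sum.inl (v j))

/-!
A simulation `≼` from `B` to the product extends to `B'` by letting a chain state `(stlk)` of `B'`
be matched by the product sitting at position `k` of the chain that replaces the matching
`(a, l)`-move `v → w` of one component: the letter `a` enters both chains, `#` and `$` walk along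
them in lockstep, and `$` exits into `t ≼ w`.

Conversely a simulation `≼'` from `B'` to the primed product, restricted to old states, is a
simulation: when `B` moves `s →^{(a,l)} t`, the product answers `a` by entering the chain of some
component `i` for a move labelled `lᵢ`. From then on only that component can read `#` or `$`, so
following the `l` hashes and the final `$` of `B'` forces `lᵢ = l` and leaves the product in the
target of that move, still related to `t`.
-/

open Function

theorem update_sumInl {ι : Type*} [DecidableEq ι] {α β : ι → Type*} (v : ∀ i, α i)
    (i : ι) (x : α i) :
    (fun j => (Sum.inl (update v i x j) : α j ⊕ β j)) =
      update (fun j => Sum.inl (v j)) i (Sum.inl x) :=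
  funext fun j => apply_update (fun _ => Sum.inl) v i x j

section PrimeDelta

variable {A Q : Type*} {m : ℕ} (δ : Q → A × Fin m → Option Q)

@[simp]
theorem mem_primeDelta_inr_hash {s t : Q} {l : Fin m} {k : ℕ} {x : Q ⊕ (Q × Q × Fin m × ℕ)} :
    x ∈ primeDelta m δ (Sum.inr (s, t, l, k)) NewLetter.hash ↔
      k < l ∧ x = Sum.inr (s, t, l, k + 1) :=
  Iff.rfl

@[simp]
theorem mem_primeDelta_inr_dollar {s t : Q} {l : Fin m} {k : ℕ} {x : Q ⊕ (Q × Q × Fin m × ℕ)} :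
    x ∈ primeDelta m δ (Sum.inr (s, t, l, k)) NewLetter.dollar ↔ k = l ∧ x = Sum.inl t :=
  Iff.rfl

@[simp]
theorem primeDelta_inl_hash (s : Q) : primeDelta m δ (Sum.inl s) NewLetter.hash = ∅ := rfl

@[simp]
theorem primeDelta_inl_dollar (s : Q) : primeDelta m δ (Sum.inl s) NewLetter.dollar = ∅ := rfl

@[simp]
theorem primeDelta_inr_letter (s t : Q) (l : Fin m) (k : ℕ) (a : A) :
    primeDelta m δ (Sum.inr (s, t, l, k)) (NewLetter.letter a) = ∅ := rfl

end PrimeDelta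

section Product

variable {n m : ℕ} {A : Type*} {Q : Fin n → Type*} (δ : ∀ i, Q i → A × Fin m → Option (Q i))

theorem mem_pdeltaO_iff {s t : ∀ i, Q i} {al : A × Fin m} :
    t ∈ pdeltaO δ s al ↔ ∃ i x, δ i (s i) al = some x ∧ t = update s i x := by
  constructor
  · rintro ⟨i, hi, hfix⟩
    exact ⟨i, t i, hi, (update_eq_iff.2 ⟨rfl, fun j hj => (hfix j hj).symm⟩).symm⟩
  · rintro ⟨i, x, hx, rfl⟩
    exact ⟨i, by rwa [update_self], fun j hj => update_of_ne hj _ _⟩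

theorem mem_pdeltaP_iff {s t : ∀ i, Q i ⊕ (Q i × Q i × Fin m × ℕ)} {a : NewLetter A} :
    t ∈ pdeltaP δ s a ↔ ∃ i x, x ∈ primeDelta m (δ i) (s i) a ∧ t = update s i x := by
  constructor
  · rintro ⟨i, hi, hfix⟩
    exact ⟨i, t i, hi, (update_eq_iff.2 ⟨rfl, fun j hj => (hfix j hj).symm⟩).symm⟩
  · rintro ⟨i, x, hx, rfl⟩
    exact ⟨i, by rwa [update_self], fun j hj => update_of_ne hj _ _⟩

theorem update_mem_pdeltaP {s : ∀ i, Q i ⊕ (Q i × Q i × Fin m × ℕ)} {a : NewLetter A} {i : Fin n}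
    {x : Q i ⊕ (Q i × Q i × Fin m × ℕ)} (hx : x ∈ primeDelta m (δ i) (s i) a) :
    update s i x ∈ pdeltaP δ s a :=
  (mem_pdeltaP_iff δ).2 ⟨i, x, hx, rfl⟩

theorem update_mem_pdeltaP_update {s : ∀ i, Q i ⊕ (Q i × Q i × Fin m × ℕ)} {a : NewLetter A}
    {i : Fin n} {x y : Q i ⊕ (Q i × Q i × Fin m × ℕ)} (hx : x ∈ primeDelta m (δ i) y a) :
    update s i x ∈ pdeltaP δ (update s i y) a :=
  (mem_pdeltaP_iff δ).2 ⟨i, x, by rwa [update_self], (update_idem ..).symm⟩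

/-- Old states cannot read `#` or `$`. -/
theorem eq_update_of_mem_pdeltaP_update_inl {v : ∀ i, Q i} {i : Fin n}
    {y : Q i ⊕ (Q i × Q i × Fin m × ℕ)} {a : NewLetter A} (ha : ∀ b, a ≠ NewLetter.letter b)
    {u : ∀ i, Q i ⊕ (Q i × Q i × Fin m × ℕ)}
    (hu : u ∈ pdeltaP δ (update (fun j => Sum.inl (v j)) i y) a) :
    ∃ x ∈ primeDelta m (δ i) y a,
      update (fun j => Sum.inl (v j) : ∀ j, Q j ⊕ (Q j × Q j × Fin m × ℕ)) i x = u := by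
  obtain ⟨j, x, hx, rfl⟩ := (mem_pdeltaP_iff δ).1 hu
  obtain rfl | hji := eq_or_ne j i
  · rw [update_self] at hx
    exact ⟨x, hx, (update_idem ..).symm⟩
  · rw [update_of_ne hji] at hx
    cases a with
    | letter b => exact absurd rfl (ha b)
    | hash => simp at hx
    | dollar => simp at hx

end Product

section Simulation

variable {n m : ℕ} {A S : Type*} {Q : Fin n → Type*} (δB : S → A × Fin m → Option S)
  (δ : ∀ i, Q i → A × Fin m → Option (Q i))

theorem extRel_inl {R : S → (∀ i, Q i) → Prop} {s : S} {u : ∀ i, Q i} (hsu : R s u) :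
    extRel δB δ R (Sum.inl s) (fun i => Sum.inl (u i)) :=
  Or.inl ⟨s, u, rfl, hsu, fun _ => rfl⟩

theorem extRel_inr {R : S → (∀ i, Q i) → Prop} {s t : S} {a : A} {l : Fin m} {k : ℕ}
    {v : ∀ i, Q i} {i : Fin n} {wi : Q i} (hk : k ≤ l) (hst : δB s (a, l) = some t)
    (hsv : R s v) (htw : R t (update v i wi)) (hvw : δ i (v i) (a, l) = some wi) :
    extRel δB δ R (Sum.inr (s, t, l, k))
      (update (fun j => Sum.inl (v j)) i (Sum.inr (v i, wi, l, k))) :=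
  Or.inr ⟨s, t, l, k, a, v, update v i wi, i, rfl, hk, hst, hsv, htw, by rwa [update_self],
    fun j hj => update_of_ne hj _ _, by rw [update_self, update_self],
    fun j hj => update_of_ne hj _ _⟩

theorem extRel_step_inl {R : S → (∀ i, Q i) → Prop}
    (hR : IsSimulation (toSet δB) (pdeltaO δ) R) {s : S} {u : ∀ i, Q i} (hsu : R s u)
    {a : NewLetter A} {p : S ⊕ (S × S × Fin m × ℕ)} (hp : p ∈ primeDelta m δB (Sum.inl s) a) :
    ∃ q ∈ pdeltaP δ (fun i => Sum.inl (u i)) a, extRel δB δ R p q := by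
  cases a with
  | letter b =>
    obtain ⟨t, l, hst, rfl⟩ := hp
    obtain ⟨w, hw, htw⟩ := hR s u hsu (b, l) t hst
    obtain ⟨i, wi, hwi, rfl⟩ := (mem_pdeltaO_iff δ).1 hw
    exact ⟨_, update_mem_pdeltaP δ ⟨wi, l, hwi, rfl⟩,
      extRel_inr δB δ (Nat.zero_le _) hst hsu htw hwi⟩
  | hash => simp at hp
  | dollar => simp at hp

theorem extRel_step_inr {R : S → (∀ i, Q i) → Prop} {s t : S} {b : A} {l : Fin m} {k : ℕ}
    {v : ∀ i, Q i} {i : Fin n} {wi : Q i} (hk : k ≤ l) (hst : δB s (b, l) = some t)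
    (hsv : R s v) (htw : R t (update v i wi)) (hvw : δ i (v i) (b, l) = some wi)
    {a : NewLetter A} {p : S ⊕ (S × S × Fin m × ℕ)}
    (hp : p ∈ primeDelta m δB (Sum.inr (s, t, l, k)) a) :
    ∃ q ∈ pdeltaP δ (update (fun j => Sum.inl (v j)) i (Sum.inr (v i, wi, l, k))) a,
      extRel δB δ R p q := by
  cases a with
  | letter => simp at hp
  | hash =>
    obtain ⟨hkl, rfl⟩ := hp
    exact ⟨_, update_mem_pdeltaP_update δ (by simpa using hkl),
      extRel_inr δB δ hkl hst hsv htw hvw⟩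
  | dollar =>
    obtain ⟨rfl, rfl⟩ := hp
    refine ⟨fun j => Sum.inl (update v i wi j), ?_, extRel_inl δB δ htw⟩
    rw [update_sumInl]
    exact update_mem_pdeltaP_update δ (by simp)

theorem isSimulation_extRel {R : S → (∀ i, Q i) → Prop}
    (hR : IsSimulation (toSet δB) (pdeltaO δ) R) :
    IsSimulation (primeDelta m δB) (pdeltaP δ) (extRel δB δ R) := by
  rintro x u (⟨s, v, rfl, hsv, hu⟩ |
    ⟨s, t, l, k, b, v, w, i, rfl, hk, hst, hsv, htw, hvw, hw, hui, hu⟩)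
  · obtain rfl : u = fun i => Sum.inl (v i) := funext hu
    exact fun a p hp => extRel_step_inl δB δ hR hsv hp
  · obtain rfl : update (fun j => Sum.inl (v j) : ∀ j, Q j ⊕ (Q j × Q j × Fin m × ℕ)) i
        (Sum.inr (v i, w i, l, k)) = u :=
      update_eq_iff.2 ⟨hui.symm, fun j hj => (hu j hj).symm⟩
    have hw' : update v i (w i) = w := update_eq_iff.2 ⟨rfl, fun j hj => (hw j hj).symm⟩
    exact fun a p hp => extRel_step_inr δB δ hk hst hsv (by rwa [hw']) hvw hp

theorem IsSimulation.exit_chain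
    {R' : (S ⊕ (S × S × Fin m × ℕ)) → (∀ i, Q i ⊕ (Q i × Q i × Fin m × ℕ)) → Prop}
    (hR' : IsSimulation (primeDelta m δB) (pdeltaP δ) R') {s t : S} {l : Fin m}
    {v : ∀ i, Q i} {i : Fin n} {vi wi : Q i} {li : Fin m} {k : ℕ} (hk : k ≤ l)
    (hR : R' (Sum.inr (s, t, l, k))
      (update (fun j => Sum.inl (v j)) i (Sum.inr (vi, wi, li, k)))) :
    l = li ∧ R' (Sum.inl t) (update (fun j => Sum.inl (v j)) i (Sum.inl wi)) := by
  induction hd : (l : ℕ) - k generalizing k with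
  | zero =>
    obtain ⟨u, hu, hRu⟩ := hR' _ _ hR .dollar (Sum.inl t) (by simp; omega)
    obtain ⟨x, ⟨hkl, rfl⟩, rfl⟩ := eq_update_of_mem_pdeltaP_update_inl δ (by simp) hu
    exact ⟨Fin.ext (by omega), hRu⟩
  | succ d ih =>
    obtain ⟨u, hu, hRu⟩ := hR' _ _ hR .hash (Sum.inr (s, t, l, k + 1)) (by simp; omega)
    obtain ⟨x, ⟨hkl, rfl⟩, rfl⟩ := eq_update_of_mem_pdeltaP_update_inl δ (by simp) hu
    exact ih (by omega) hRu (by omega)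

theorem IsSimulation.restrict_inl
    {R' : (S ⊕ (S × S × Fin m × ℕ)) → (∀ i, Q i ⊕ (Q i × Q i × Fin m × ℕ)) → Prop}
    (hR' : IsSimulation (primeDelta m δB) (pdeltaP δ) R') :
    IsSimulation (toSet δB) (pdeltaO δ) fun s v => R' (Sum.inl s) fun i => Sum.inl (v i) := by
  rintro s v hsv ⟨b, l⟩ t (hst : δB s (b, l) = some t)
  obtain ⟨u, hu, hRu⟩ := hR' _ _ hsv (.letter b) (Sum.inr (s, t, l, 0)) ⟨t, l, hst, rfl⟩
  obtain ⟨i, x, hx, rfl⟩ := (mem_pdeltaP_iff δ).1 hu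
  obtain ⟨wi, li, hwi, rfl⟩ := hx
  obtain ⟨rfl, hRt⟩ := hR'.exit_chain δB δ (Nat.zero_le _) hRu
  refine ⟨update v i wi, (mem_pdeltaO_iff δ).2 ⟨i, wi, hwi, rfl⟩, ?_⟩
  rwa [← update_sumInl] at hRt

end Simulation

/-- The alphabet-reduction construction preserves simulation on old states:
any simulation `≼` from `B` to `A₁ ⊗ ⋯ ⊗ Aₙ` extends to a simulation `≼'` from
`B'` to `A'₁ ⊗ ⋯ ⊗ A'ₙ`, and the largest simulation between the primed automata
restricted to pairs of old states coincides with the largest simulation between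
the original ones. -/
theorem alphabet_reduction_preserves_simulation {n m : ℕ} {A S : Type*}
    {Q : Fin n → Type*}
    (δB : S → A × Fin m → Option S)
    (δ : ∀ i, Q i → A × Fin m → Option (Q i)) :
    (∀ R : S → (∀ i, Q i) → Prop,
      IsSimulation (toSet δB) (pdeltaO δ) R →
      IsSimulation (primeDelta m δB) (pdeltaP δ) (extRel δB δ R)) ∧
    (∀ (s : S) (u : ∀ i, Q i),
      Sim (primeDelta m δB) (pdeltaP δ)
          (Sum.inl s) (fun i => Sum.inl (u i)) ↔
      Sim (toSet δB) (pdeltaO δ) s u) := by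
  refine ⟨fun R hR => isSimulation_extRel δB δ hR, fun s u => ⟨?_, ?_⟩⟩
  · rintro ⟨R', hR', hsu⟩
    exact ⟨_, hR'.restrict_inl δB δ, hsu⟩
  · rintro ⟨R, hR, hsu⟩
    exact ⟨_, isSimulation_extRel δB δ hR, extRel_inl δB δ hsu⟩
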